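/- arXiv:1911.07168 — 3 statements merged into one kernel-verified Lean document; each statement's English description precedes it below -/
import Mathlib

section
/- Let m, k, g, ℓ₀ > 0 and let θ, ℓ : ℝ → ℝ be twice differentiable with ℓ(t) > 0. Suppose the stance dynamics hold: m ℓ̈ = m ℓ θ̇² - k(ℓ - ℓ₀) - m g sin θ + k u₁ and m ℓ² θ̈ = -m g ℓ cos θ - 2 m ℓ ℓ̇ θ̇ + u₂. Define y₁ = ℓ cos θ, y₂ = ℓ sin θ. Then ÿ₁ = (k/m) cos(θ)(ℓ₀ - ℓ + u₁) - (sin θ)/(m ℓ) · u₂ and ÿ₂ = (k/m) sin(θ)(ℓ₀ - ℓ + u₁) + (cos θ)/(m ℓ) · u₂ - g. -/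
/-!
Differentiating `y = ℓ (cos θ, sin θ)` twice gives the acceleration in polar form,
`ÿ = a_r (cos θ, sin θ) + a_θ (-sin θ, cos θ)` with radial part `a_r = ℓ̈ - ℓ θ̇²` and
tangential part `a_θ = ℓ θ̈ + 2 ℓ̇ θ̇`. The stance dynamics are exactly the statements
`a_r = (k/m)(ℓ₀ - ℓ + u₁) - g sin θ` and `a_θ = u₂/(m ℓ) - g cos θ`, and the gravity terms
recombine into `(0, -g)` because `sin² θ + cos² θ = 1`.
-/

open Real

section PolarKinematics

variable {θ ℓ θ' ℓ' : ℝ → ℝ} {t θ'' ℓ'' : ℝ}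

theorem hasDerivAt_mul_cos_comp (hθ : HasDerivAt θ (θ' t) t) (hℓ : HasDerivAt ℓ (ℓ' t) t) :
    HasDerivAt (fun s => ℓ s * cos (θ s)) (-sin (θ t) * θ' t * ℓ t + cos (θ t) * ℓ' t) t :=
  (hℓ.mul hθ.cos).congr_deriv (by ring)

theorem hasDerivAt_mul_sin_comp (hθ : HasDerivAt θ (θ' t) t) (hℓ : HasDerivAt ℓ (ℓ' t) t) :
    HasDerivAt (fun s => ℓ s * sin (θ s)) (cos (θ t) * θ' t * ℓ t + sin (θ t) * ℓ' t) t :=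
  (hℓ.mul hθ.sin).congr_deriv (by ring)

theorem hasDerivAt_polar_velocity_fst (hθ : HasDerivAt θ (θ' t) t) (hθ' : HasDerivAt θ' θ'' t)
    (hℓ : HasDerivAt ℓ (ℓ' t) t) (hℓ' : HasDerivAt ℓ' ℓ'' t) :
    HasDerivAt (fun s => -sin (θ s) * θ' s * ℓ s + cos (θ s) * ℓ' s)
      (cos (θ t) * (ℓ'' - ℓ t * θ' t ^ 2) - sin (θ t) * (ℓ t * θ'' + 2 * ℓ' t * θ' t)) t :=
  (((hθ.sin.neg.mul hθ').mul hℓ).add (hθ.cos.mul hℓ')).congr_deriv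
    (by simp only [Pi.mul_apply, Pi.neg_apply]; ring)

theorem hasDerivAt_polar_velocity_snd (hθ : HasDerivAt θ (θ' t) t) (hθ' : HasDerivAt θ' θ'' t)
    (hℓ : HasDerivAt ℓ (ℓ' t) t) (hℓ' : HasDerivAt ℓ' ℓ'' t) :
    HasDerivAt (fun s => cos (θ s) * θ' s * ℓ s + sin (θ s) * ℓ' s)
      (sin (θ t) * (ℓ'' - ℓ t * θ' t ^ 2) + cos (θ t) * (ℓ t * θ'' + 2 * ℓ' t * θ' t)) t :=
  (((hθ.cos.mul hθ').mul hℓ).add (hθ.sin.mul hℓ')).congr_deriv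
    (by simp only [Pi.mul_apply]; ring)

end PolarKinematics

section StanceDynamics

variable {m k g ℓ₀ θ ℓ θ' θ'' ℓ' ℓ'' u₁ u₂ : ℝ}

theorem radial_accel_eq_of_stance (hm : m ≠ 0)
    (h : m * ℓ'' = m * ℓ * θ' ^ 2 - k * (ℓ - ℓ₀) - m * g * sin θ + k * u₁) :
    ℓ'' - ℓ * θ' ^ 2 = k / m * (ℓ₀ - ℓ + u₁) - g * sin θ := by
  field_simp
  linear_combination h

theorem tangential_accel_eq_of_stance (hm : m ≠ 0) (hℓ : ℓ ≠ 0)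
    (h : m * ℓ ^ 2 * θ'' = -(m * g * ℓ * cos θ) - 2 * m * ℓ * ℓ' * θ' + u₂) :
    ℓ * θ'' + 2 * ℓ' * θ' = u₂ / (m * ℓ) - g * cos θ := by
  field_simp
  linear_combination h

end StanceDynamics

theorem stmt2_general (m k g ℓ₀ : ℝ) (hm : 0 < m)
    (θ ℓ θ' θ'' ℓ' ℓ'' u₁ u₂ : ℝ → ℝ)
    (hθ : ∀ t, HasDerivAt θ (θ' t) t) (hθ' : ∀ t, HasDerivAt θ' (θ'' t) t)
    (hℓ : ∀ t, HasDerivAt ℓ (ℓ' t) t) (hℓ' : ∀ t, HasDerivAt ℓ' (ℓ'' t) t)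
    (hpos : ∀ t, 0 < ℓ t)
    (hdyn1 : ∀ t, m * ℓ'' t
      = m * ℓ t * (θ' t) ^ 2 - k * (ℓ t - ℓ₀) - m * g * Real.sin (θ t) + k * u₁ t)
    (hdyn2 : ∀ t, m * (ℓ t) ^ 2 * θ'' t
      = -(m * g * ℓ t * Real.cos (θ t)) - 2 * m * ℓ t * ℓ' t * θ' t + u₂ t) :
    ∀ t : ℝ,
      HasDerivAt (fun s => ℓ s * Real.cos (θ s))
        (-Real.sin (θ t) * θ' t * ℓ t + Real.cos (θ t) * ℓ' t) t ∧
      HasDerivAt (fun s => -Real.sin (θ s) * θ' s * ℓ s + Real.cos (θ s) * ℓ' s)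
        (k / m * Real.cos (θ t) * (ℓ₀ - ℓ t + u₁ t) - Real.sin (θ t) / (m * ℓ t) * u₂ t) t ∧
      HasDerivAt (fun s => ℓ s * Real.sin (θ s))
        (Real.cos (θ t) * θ' t * ℓ t + Real.sin (θ t) * ℓ' t) t ∧
      HasDerivAt (fun s => Real.cos (θ s) * θ' s * ℓ s + Real.sin (θ s) * ℓ' s)
        (k / m * Real.sin (θ t) * (ℓ₀ - ℓ t + u₁ t) + Real.cos (θ t) / (m * ℓ t) * u₂ t - g) t := by
  intro t
  have radial := radial_accel_eq_of_stance hm.ne' (hdyn1 t)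
  have tangential := tangential_accel_eq_of_stance hm.ne' (hpos t).ne' (hdyn2 t)
  refine ⟨hasDerivAt_mul_cos_comp (hθ t) (hℓ t), ?_, hasDerivAt_mul_sin_comp (hθ t) (hℓ t), ?_⟩
  · refine (hasDerivAt_polar_velocity_fst (hθ t) (hθ' t) (hℓ t) (hℓ' t)).congr_deriv ?_
    rw [radial, tangential]
    ring
  · refine (hasDerivAt_polar_velocity_snd (hθ t) (hθ' t) (hℓ t) (hℓ' t)).congr_deriv ?_
    rw [radial, tangential]
    linear_combination (-g) * sin_sq_add_cos_sq (θ t)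

theorem stmt2 (m k g ℓ₀ : ℝ) (hm : 0 < m) (hk : 0 < k) (hg : 0 < g) (hℓ₀ : 0 < ℓ₀)
    (θ ℓ θ' θ'' ℓ' ℓ'' u₁ u₂ : ℝ → ℝ)
    (hθ : ∀ t, HasDerivAt θ (θ' t) t) (hθ' : ∀ t, HasDerivAt θ' (θ'' t) t)
    (hℓ : ∀ t, HasDerivAt ℓ (ℓ' t) t) (hℓ' : ∀ t, HasDerivAt ℓ' (ℓ'' t) t)
    (hpos : ∀ t, 0 < ℓ t)
    (hdyn1 : ∀ t, m * ℓ'' t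
      = m * ℓ t * (θ' t) ^ 2 - k * (ℓ t - ℓ₀) - m * g * Real.sin (θ t) + k * u₁ t)
    (hdyn2 : ∀ t, m * (ℓ t) ^ 2 * θ'' t
      = -(m * g * ℓ t * Real.cos (θ t)) - 2 * m * ℓ t * ℓ' t * θ' t + u₂ t) :
    ∀ t : ℝ,
      HasDerivAt (fun s => ℓ s * Real.cos (θ s))
        (-Real.sin (θ t) * θ' t * ℓ t + Real.cos (θ t) * ℓ' t) t ∧
      HasDerivAt (fun s => -Real.sin (θ s) * θ' s * ℓ s + Real.cos (θ s) * ℓ' s)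
        (k / m * Real.cos (θ t) * (ℓ₀ - ℓ t + u₁ t) - Real.sin (θ t) / (m * ℓ t) * u₂ t) t ∧
      HasDerivAt (fun s => ℓ s * Real.sin (θ s))
        (Real.cos (θ t) * θ' t * ℓ t + Real.sin (θ t) * ℓ' t) t ∧
      HasDerivAt (fun s => Real.cos (θ s) * θ' s * ℓ s + Real.sin (θ s) * ℓ' s)
        (k / m * Real.sin (θ t) * (ℓ₀ - ℓ t + u₁ t) + Real.cos (θ t) / (m * ℓ t) * u₂ t - g) t :=
  stmt2_general m k g ℓ₀ hm θ ℓ θ' θ'' ℓ' ℓ'' u₁ u₂ hθ hθ' hℓ hℓ' hpos hdyn1 hdyn2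
end

section
/- Under the hypotheses of the previous flat-output derivative computation, the inputs are recovered from the flat outputs by u₁ = √(y₁² + y₂²) + (m y₁ ÿ₁ + m y₂ ÿ₂ + m g y₂)/(k √(y₁² + y₂²)) - ℓ₀ and u₂ = m g y₁ + m y₁ ÿ₂ - m y₂ ÿ₁. -/
/-!
Project the acceleration `(ÿ₁, ÿ₂ + g)` onto the leg direction `(cos θ, sin θ)` and onto its
normal `(-sin θ, cos θ)`: the radial component is the spring force `(k/m)(ℓ₀ - ℓ + u₁)` and the
tangential one is the hip torque term `u₂/(m ℓ)`. Multiplying by `ℓ` turns the projections into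
expressions in the flat outputs, and `ℓ = √(y₁² + y₂²)` recovers the leg length.
-/

namespace SLIP

lemma sqrt_polar_sq {ℓ : ℝ} (hℓ : 0 ≤ ℓ) (θ : ℝ) :
    Real.sqrt ((ℓ * Real.cos θ) ^ 2 + (ℓ * Real.sin θ) ^ 2) = ℓ := by
  have h : (ℓ * Real.cos θ) ^ 2 + (ℓ * Real.sin θ) ^ 2 = ℓ ^ 2 := by
    linear_combination ℓ ^ 2 * Real.cos_sq_add_sin_sq θ
  rw [h, Real.sqrt_sq hℓ]

variable {m k g ℓ₀ ℓ θ u₁ u₂ : ℝ}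

lemma radial_projection (hm : m ≠ 0) :
    m * ((ℓ * Real.cos θ) * (k / m * Real.cos θ * (ℓ₀ - ℓ + u₁) - Real.sin θ / (m * ℓ) * u₂)
      + (ℓ * Real.sin θ) * (k / m * Real.sin θ * (ℓ₀ - ℓ + u₁) + Real.cos θ / (m * ℓ) * u₂ - g)
      + g * (ℓ * Real.sin θ)) = k * ℓ * (ℓ₀ - ℓ + u₁) := by
  by_cases hℓ : ℓ = 0
  · subst hℓ; simp
  field_simp
  linear_combination k * ℓ * (ℓ₀ - ℓ + u₁) * Real.cos_sq_add_sin_sq θ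

lemma tangential_projection (hm : m ≠ 0) (hℓ : ℓ ≠ 0) :
    m * ((ℓ * Real.cos θ) * (k / m * Real.sin θ * (ℓ₀ - ℓ + u₁) + Real.cos θ / (m * ℓ) * u₂ - g)
      - (ℓ * Real.sin θ) * (k / m * Real.cos θ * (ℓ₀ - ℓ + u₁) - Real.sin θ / (m * ℓ) * u₂)
      + g * (ℓ * Real.cos θ)) = u₂ := by
  field_simp
  linear_combination u₂ * Real.cos_sq_add_sin_sq θ

end SLIP

theorem stmt3_general (m k g ℓ₀ ℓ θ u₁ u₂ y₁ y₂ ddy₁ ddy₂ : ℝ)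
    (hm : 0 < m) (hk : 0 < k) (hℓ : 0 < ℓ)
    (hy1 : y₁ = ℓ * Real.cos θ) (hy2 : y₂ = ℓ * Real.sin θ)
    (hd1 : ddy₁ = k / m * Real.cos θ * (ℓ₀ - ℓ + u₁) - Real.sin θ / (m * ℓ) * u₂)
    (hd2 : ddy₂ = k / m * Real.sin θ * (ℓ₀ - ℓ + u₁) + Real.cos θ / (m * ℓ) * u₂ - g) :
    u₁ = Real.sqrt (y₁ ^ 2 + y₂ ^ 2)
        + (m * y₁ * ddy₁ + m * y₂ * ddy₂ + m * g * y₂) / (k * Real.sqrt (y₁ ^ 2 + y₂ ^ 2)) - ℓ₀ ∧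
    u₂ = m * g * y₁ + m * y₁ * ddy₂ - m * y₂ * ddy₁ := by
  subst hy1 hy2 hd1 hd2
  have radial := SLIP.radial_projection (k := k) (g := g) (ℓ₀ := ℓ₀) (ℓ := ℓ) (θ := θ)
    (u₁ := u₁) (u₂ := u₂) hm.ne'
  have tangential := SLIP.tangential_projection (k := k) (g := g) (ℓ₀ := ℓ₀) (θ := θ)
    (u₁ := u₁) (u₂ := u₂) hm.ne' hℓ.ne'
  rw [SLIP.sqrt_polar_sq hℓ.le]
  constructor
  · rw [eq_sub_iff_add_eq, ← sub_eq_iff_eq_add', eq_div_iff (by positivity)]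
    linear_combination -radial
  · linear_combination -tangential

theorem stmt3 (m k g ℓ₀ ℓ θ u₁ u₂ y₁ y₂ ddy₁ ddy₂ : ℝ)
    (hm : 0 < m) (hk : 0 < k) (hg : 0 < g) (hℓ₀ : 0 < ℓ₀) (hℓ : 0 < ℓ)
    (hy1 : y₁ = ℓ * Real.cos θ) (hy2 : y₂ = ℓ * Real.sin θ)
    (hd1 : ddy₁ = k / m * Real.cos θ * (ℓ₀ - ℓ + u₁) - Real.sin θ / (m * ℓ) * u₂)
    (hd2 : ddy₂ = k / m * Real.sin θ * (ℓ₀ - ℓ + u₁) + Real.cos θ / (m * ℓ) * u₂ - g) :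
    u₁ = Real.sqrt (y₁ ^ 2 + y₂ ^ 2)
        + (m * y₁ * ddy₁ + m * y₂ * ddy₂ + m * g * y₂) / (k * Real.sqrt (y₁ ^ 2 + y₂ ^ 2)) - ℓ₀ ∧
    u₂ = m * g * y₁ + m * y₁ * ddy₂ - m * y₂ * ddy₁ :=
  stmt3_general m k g ℓ₀ ℓ θ u₁ u₂ y₁ y₂ ddy₁ ddy₂ hm hk hℓ hy1 hy2 hd1 hd2
end

section
/- Given the extended SLIP stance dynamics, for any twice continuously differentiable curves y₁, y₂ : [0,T] → ℝ with y₁(t)² + y₂(t)² > 0 and y₂(t) > 0 for all t, defining θ(t) = arccot(y₁(t)/y₂(t)) (valued in (0,π)), ℓ(t) = √(y₁(t)² + y₂(t)²), u₁ and u₂ by the flatness inversion formulas, the resulting curves (θ, ℓ) satisfy the stance equations of motion m ℓ̈ = m ℓ θ̇² - k(ℓ - ℓ₀) - m g sin θ + k u₁ and m ℓ² θ̈ = -m g ℓ cos θ - 2 m ℓ ℓ̇ θ̇ + u₂. -/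
/-! In polar coordinates `y = ℓ (cos θ, sin θ)` the acceleration splits into the radial part
`ℓ̈ - ℓ θ̇² = ⟪y, ÿ⟫ / ℓ` and the angular part `ℓ² θ̈ + 2 ℓ ℓ̇ θ̇ = y × ÿ`; the first follows from
Lagrange's identity `⟪y, ẏ⟫² + (y × ẏ)² = |y|² |ẏ|²`. Substituting `sin θ = y₂ / ℓ`,
`cos θ = y₁ / ℓ` and the inversion formulas for `u₁`, `u₂`, the two stance equations reduce to
exactly these identities. -/

open Real

noncomputable def arccot (x : ℝ) : ℝ := π / 2 - Real.arctan x

theorem sin_arccot (x : ℝ) : sin (arccot x) = 1 / √(1 + x ^ 2) := by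
  rw [arccot, sin_pi_div_two_sub, cos_arctan]

theorem cos_arccot (x : ℝ) : cos (arccot x) = x / √(1 + x ^ 2) := by
  rw [arccot, cos_pi_div_two_sub, sin_arctan]

theorem sqrt_one_add_div_sq (a : ℝ) {b : ℝ} (hb : 0 < b) :
    √(1 + (a / b) ^ 2) = √(a ^ 2 + b ^ 2) / b := by
  rw [show 1 + (a / b) ^ 2 = (a ^ 2 + b ^ 2) / b ^ 2 by field_simp; ring,
    sqrt_div' _ (sq_nonneg b), sqrt_sq hb.le]

theorem sin_arccot_div (a : ℝ) {b : ℝ} (hb : 0 < b) :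
    sin (arccot (a / b)) = b / √(a ^ 2 + b ^ 2) := by
  rw [sin_arccot, sqrt_one_add_div_sq a hb, one_div_div]

theorem cos_arccot_div (a : ℝ) {b : ℝ} (hb : 0 < b) :
    cos (arccot (a / b)) = a / √(a ^ 2 + b ^ 2) := by
  have hr : √(a ^ 2 + b ^ 2) ≠ 0 := (sqrt_pos.2 (by positivity)).ne'
  rw [cos_arccot, sqrt_one_add_div_sq a hb]
  field_simp

theorem HasDerivAt.arccot {f : ℝ → ℝ} {f' x : ℝ} (hf : HasDerivAt f f' x) :
    HasDerivAt (fun x => arccot (f x)) (-f' / (1 + f x ^ 2)) x :=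
  ((hasDerivAt_const x (π / 2)).sub hf.arctan).congr_deriv (by ring)

section PolarCoordinates

variable {y₁ y₂ dy₁ dy₂ ddy₁ ddy₂ : ℝ → ℝ} {t a b : ℝ}

noncomputable def polarRadius (y₁ y₂ : ℝ → ℝ) (t : ℝ) : ℝ := √(y₁ t ^ 2 + y₂ t ^ 2)

/-- The polar angle of `(y₁ t, y₂ t)`, valued in `(0, π)`, as long as `y₂ t > 0`. -/
noncomputable def polarAngle (y₁ y₂ : ℝ → ℝ) (t : ℝ) : ℝ := arccot (y₁ t / y₂ t)

theorem sq_polarRadius (h : 0 < y₁ t ^ 2 + y₂ t ^ 2) :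
    polarRadius y₁ y₂ t ^ 2 = y₁ t ^ 2 + y₂ t ^ 2 :=
  sq_sqrt h.le

theorem hasDerivAt_polarRadius (ha : HasDerivAt y₁ a t) (hb : HasDerivAt y₂ b t)
    (h : 0 < y₁ t ^ 2 + y₂ t ^ 2) :
    HasDerivAt (polarRadius y₁ y₂) ((y₁ t * a + y₂ t * b) / polarRadius y₁ y₂ t) t := by
  refine (((ha.fun_pow 2).fun_add (hb.fun_pow 2)).sqrt h.ne').congr_deriv ?_
  simp only [polarRadius]
  field_simp
  ring

theorem hasDerivAt_polarAngle (ha : HasDerivAt y₁ a t) (hb : HasDerivAt y₂ b t)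
    (h : y₂ t ≠ 0) :
    HasDerivAt (polarAngle y₁ y₂) ((y₁ t * b - y₂ t * a) / (y₁ t ^ 2 + y₂ t ^ 2)) t := by
  refine (ha.fun_div hb h).arccot.congr_deriv ?_
  field_simp
  ring

theorem deriv_polarRadius (hy₁ : ∀ t, HasDerivAt y₁ (dy₁ t) t)
    (hy₂ : ∀ t, HasDerivAt y₂ (dy₂ t) t)
    (h : ∀ t, 0 < y₁ t ^ 2 + y₂ t ^ 2) :
    deriv (polarRadius y₁ y₂) = fun t => (y₁ t * dy₁ t + y₂ t * dy₂ t) / polarRadius y₁ y₂ t :=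
  funext fun t => (hasDerivAt_polarRadius (hy₁ t) (hy₂ t) (h t)).deriv

theorem deriv_polarAngle (hy₁ : ∀ t, HasDerivAt y₁ (dy₁ t) t)
    (hy₂ : ∀ t, HasDerivAt y₂ (dy₂ t) t)
    (h : ∀ t, y₂ t ≠ 0) :
    deriv (polarAngle y₁ y₂) = fun t => (y₁ t * dy₂ t - y₂ t * dy₁ t) / (y₁ t ^ 2 + y₂ t ^ 2) :=
  funext fun t => (hasDerivAt_polarAngle (hy₁ t) (hy₂ t) (h t)).deriv

theorem polarRadius_radial_acceleration
    (hy₁ : ∀ t, HasDerivAt y₁ (dy₁ t) t) (hdy₁ : ∀ t, HasDerivAt dy₁ (ddy₁ t) t)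
    (hy₂ : ∀ t, HasDerivAt y₂ (dy₂ t) t) (hdy₂ : ∀ t, HasDerivAt dy₂ (ddy₂ t) t)
    (h : ∀ t, y₂ t ≠ 0) (t : ℝ) :
    deriv (deriv (polarRadius y₁ y₂)) t - polarRadius y₁ y₂ t * deriv (polarAngle y₁ y₂) t ^ 2
      = (y₁ t * ddy₁ t + y₂ t * ddy₂ t) / polarRadius y₁ y₂ t := by
  have hS (s : ℝ) : 0 < y₁ s ^ 2 + y₂ s ^ 2 := by have := h s; positivity
  have hN : HasDerivAt (fun s => y₁ s * dy₁ s + y₂ s * dy₂ s)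
      (dy₁ t ^ 2 + y₁ t * ddy₁ t + (dy₂ t ^ 2 + y₂ t * ddy₂ t)) t :=
    (((hy₁ t).mul (hdy₁ t)).add ((hy₂ t).mul (hdy₂ t))).congr_deriv (by ring)
  have hr := hasDerivAt_polarRadius (hy₁ t) (hy₂ t) (hS t)
  have hr0 : polarRadius y₁ y₂ t ≠ 0 := sqrt_ne_zero'.2 (hS t)
  have hr2 := sq_polarRadius (hS t)
  rw [deriv_polarRadius hy₁ hy₂ hS, (hN.fun_div hr hr0).deriv,
    (hasDerivAt_polarAngle (hy₁ t) (hy₂ t) (h t)).deriv, ← hr2]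
  field_simp
  linear_combination (dy₁ t ^ 2 + dy₂ t ^ 2) * hr2

theorem polarAngle_angular_acceleration
    (hy₁ : ∀ t, HasDerivAt y₁ (dy₁ t) t) (hdy₁ : ∀ t, HasDerivAt dy₁ (ddy₁ t) t)
    (hy₂ : ∀ t, HasDerivAt y₂ (dy₂ t) t) (hdy₂ : ∀ t, HasDerivAt dy₂ (ddy₂ t) t)
    (h : ∀ t, y₂ t ≠ 0) (t : ℝ) :
    polarRadius y₁ y₂ t ^ 2 * deriv (deriv (polarAngle y₁ y₂)) t
        + 2 * polarRadius y₁ y₂ t * deriv (polarRadius y₁ y₂) t * deriv (polarAngle y₁ y₂) t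
      = y₁ t * ddy₂ t - y₂ t * ddy₁ t := by
  have hS (s : ℝ) : 0 < y₁ s ^ 2 + y₂ s ^ 2 := by have := h s; positivity
  have hM : HasDerivAt (fun s => y₁ s * dy₂ s - y₂ s * dy₁ s)
      (y₁ t * ddy₂ t - y₂ t * ddy₁ t) t :=
    (((hy₁ t).mul (hdy₂ t)).sub ((hy₂ t).mul (hdy₁ t))).congr_deriv (by ring)
  have hS' : HasDerivAt (fun s => y₁ s ^ 2 + y₂ s ^ 2) (2 * (y₁ t * dy₁ t + y₂ t * dy₂ t)) t :=
    (((hy₁ t).pow 2).add ((hy₂ t).pow 2)).congr_deriv (by ring)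
  have hr0 : polarRadius y₁ y₂ t ≠ 0 := sqrt_ne_zero'.2 (hS t)
  rw [deriv_polarAngle hy₁ hy₂ h, (hM.fun_div hS' (hS t).ne').deriv, deriv_polarRadius hy₁ hy₂ hS,
    sq_polarRadius (hS t)]
  have hSt := (hS t).ne'
  field_simp
  ring

end PolarCoordinates

theorem stmt15_general (m k g ℓ₀ : ℝ) (hk : 0 < k)
    (y₁ y₂ dy₁ dy₂ ddy₁ ddy₂ : ℝ → ℝ)
    (hy₁ : ∀ t, HasDerivAt y₁ (dy₁ t) t) (hdy₁ : ∀ t, HasDerivAt dy₁ (ddy₁ t) t)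
    (hy₂ : ∀ t, HasDerivAt y₂ (dy₂ t) t) (hdy₂ : ∀ t, HasDerivAt dy₂ (ddy₂ t) t)
    (hy₂pos : ∀ t, 0 < y₂ t) :
    let θ : ℝ → ℝ := fun t => arccot (y₁ t / y₂ t)
    let ℓ : ℝ → ℝ := fun t => Real.sqrt ((y₁ t) ^ 2 + (y₂ t) ^ 2)
    let u₁ : ℝ → ℝ := fun t => Real.sqrt ((y₁ t) ^ 2 + (y₂ t) ^ 2)
        + (m * y₁ t * ddy₁ t + m * y₂ t * ddy₂ t + m * g * y₂ t)
          / (k * Real.sqrt ((y₁ t) ^ 2 + (y₂ t) ^ 2)) - ℓ₀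
    let u₂ : ℝ → ℝ := fun t => m * g * y₁ t + m * y₁ t * ddy₂ t - m * y₂ t * ddy₁ t
    ∀ t : ℝ,
      m * deriv (deriv ℓ) t
        = m * ℓ t * (deriv θ t) ^ 2 - k * (ℓ t - ℓ₀) - m * g * Real.sin (θ t) + k * u₁ t ∧
      m * (ℓ t) ^ 2 * deriv (deriv θ) t
        = -(m * g * ℓ t * Real.cos (θ t)) - 2 * m * ℓ t * deriv ℓ t * deriv θ t + u₂ t := by
  intro θ ℓ u₁ u₂ t
  have hy₂ne (s : ℝ) : y₂ s ≠ 0 := (hy₂pos s).ne'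
  have hradial : deriv (deriv ℓ) t - ℓ t * deriv θ t ^ 2
      = (y₁ t * ddy₁ t + y₂ t * ddy₂ t) / ℓ t :=
    polarRadius_radial_acceleration hy₁ hdy₁ hy₂ hdy₂ hy₂ne t
  have hangular : ℓ t ^ 2 * deriv (deriv θ) t + 2 * ℓ t * deriv ℓ t * deriv θ t
      = y₁ t * ddy₂ t - y₂ t * ddy₁ t :=
    polarAngle_angular_acceleration hy₁ hdy₁ hy₂ hdy₂ hy₂ne t
  have hsin : sin (θ t) = y₂ t / ℓ t := sin_arccot_div (y₁ t) (hy₂pos t)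
  have hcos : cos (θ t) = y₁ t / ℓ t := cos_arccot_div (y₁ t) (hy₂pos t)
  have hu₁ : u₁ t = ℓ t + (m * y₁ t * ddy₁ t + m * y₂ t * ddy₂ t + m * g * y₂ t) / (k * ℓ t) - ℓ₀ :=
    rfl
  have hℓ : ℓ t ≠ 0 := (sqrt_pos.2 (by have := hy₂pos t; positivity)).ne'
  have hk0 := hk.ne'
  constructor
  · rw [eq_div_iff hℓ] at hradial
    rw [hsin, hu₁]
    field_simp
    linear_combination m * hradial
  · rw [hcos]
    field_simp
    linear_combination m * hangular

theorem stmt15 (m k g ℓ₀ : ℝ) (hm : 0 < m) (hk : 0 < k) (hg : 0 < g) (hℓ₀ : 0 < ℓ₀)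
    (y₁ y₂ dy₁ dy₂ ddy₁ ddy₂ : ℝ → ℝ)
    (hy₁ : ∀ t, HasDerivAt y₁ (dy₁ t) t) (hdy₁ : ∀ t, HasDerivAt dy₁ (ddy₁ t) t)
    (hy₂ : ∀ t, HasDerivAt y₂ (dy₂ t) t) (hdy₂ : ∀ t, HasDerivAt dy₂ (ddy₂ t) t)
    (hpos : ∀ t, 0 < (y₁ t) ^ 2 + (y₂ t) ^ 2) (hy₂pos : ∀ t, 0 < y₂ t) :
    let θ : ℝ → ℝ := fun t => arccot (y₁ t / y₂ t)
    let ℓ : ℝ → ℝ := fun t => Real.sqrt ((y₁ t) ^ 2 + (y₂ t) ^ 2)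
    let u₁ : ℝ → ℝ := fun t => Real.sqrt ((y₁ t) ^ 2 + (y₂ t) ^ 2)
        + (m * y₁ t * ddy₁ t + m * y₂ t * ddy₂ t + m * g * y₂ t)
          / (k * Real.sqrt ((y₁ t) ^ 2 + (y₂ t) ^ 2)) - ℓ₀
    let u₂ : ℝ → ℝ := fun t => m * g * y₁ t + m * y₁ t * ddy₂ t - m * y₂ t * ddy₁ t
    ∀ t : ℝ,
      m * deriv (deriv ℓ) t
        = m * ℓ t * (deriv θ t) ^ 2 - k * (ℓ t - ℓ₀) - m * g * Real.sin (θ t) + k * u₁ t ∧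
      m * (ℓ t) ^ 2 * deriv (deriv θ) t
        = -(m * g * ℓ t * Real.cos (θ t)) - 2 * m * ℓ t * deriv ℓ t * deriv θ t + u₂ t :=
  stmt15_general m k g ℓ₀ hk y₁ y₂ dy₁ dy₂ ddy₁ ddy₂ hy₁ hdy₁ hy₂ hdy₂ hy₂pos
end
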